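/- arXiv:2306.05269 — 3 statements merged into one kernel-verified Lean document; each statement's English description precedes it below -/
import Mathlib

section
/- Let F be a field, G a finite group, G = ⊔_{i=1}^r s_i K a coset decomposition for a subgroup K ≤ G, M a field extension of F equipped with a K-action by F-algebra automorphisms, and let L = Ind_K^G M = ⊕_{i=1}^r s_i·M with the induced G-action. Let H ≤ G. If H acts transitively on G/K by left translation, then the H-fixed subalgebra L^H is a field (every nonzero element is invertible); if H does not act transitively on G/K and char F does not divide |H|, then L^H contains a nonzero zero-divisor, hence is not a field. -/
/-!
If `H` acts transitively on `G/K`, every `g ∈ G` lies in a double coset `H g₀ K`, so an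
`H`-fixed `K`-equivariant `f` satisfies `f g = φ(k)⁻¹ (f g₀)`: it vanishes nowhere as soon as
it is nonzero, and its pointwise inverse is again fixed and equivariant. Otherwise `G/K` has
two distinct `H`-orbits; the indicator functions of their preimages in `G` are nonzero, fixed,
equivariant, and their product is zero.
-/

open MulAction

namespace InducedAlgebra

variable {F M G : Type*} [Group G] {K H : Subgroup G}

def IsEquivariant [CommSemiring F] [Semiring M] [Algebra F M] (φ : K →* (M ≃ₐ[F] M))
    (f : G → M) : Prop :=
  ∀ (g : G) (k : K), f (g * k) = (φ k)⁻¹ (f g)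

def IsFixed {α : Type*} (H : Subgroup G) (f : G → α) : Prop :=
  ∀ h ∈ H, ∀ g : G, f (h⁻¹ * g) = f g

theorem IsFixed.apply_mul {α : Type*} {f : G → α} (hf : IsFixed H f) {h : G} (hh : h ∈ H)
    (g : G) : f (h * g) = f g := by
  simpa using hf h⁻¹ (H.inv_mem hh) g

theorem IsFixed.comp {α β : Type*} {f : G → α} (hf : IsFixed H f) (u : α → β) :
    IsFixed H (u ∘ f) :=
  fun h hh g => congrArg u (hf h hh g)

theorem exists_mul_mul_eq_of_isPretransitive [IsPretransitive H (G ⧸ K)] (g₀ g : G) :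
    ∃ h ∈ H, ∃ k : K, h * g₀ * k = g := by
  obtain ⟨h, hh⟩ := exists_smul_eq H (g₀ : G ⧸ K) g
  exact ⟨h, h.2, ⟨(h * g₀)⁻¹ * g, QuotientGroup.eq.mp hh⟩, mul_inv_cancel_left _ _⟩

section Transitive

variable [CommSemiring F]

section Semiring

variable [Semiring M] [Algebra F M] {φ : K →* (M ≃ₐ[F] M)} {f : G → M}

theorem IsEquivariant.apply_mul_mul_of_isFixed (hP : IsEquivariant φ f) (hF : IsFixed H f)
    {h : G} (hh : h ∈ H) (g : G) (k : K) :
    f (h * g * k) = (φ k)⁻¹ (f g) := by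
  rw [hP, hF.apply_mul hh]

theorem IsEquivariant.apply_ne_zero_of_isPretransitive [IsPretransitive H (G ⧸ K)]
    (hP : IsEquivariant φ f) (hF : IsFixed H f) {g₀ : G} (hg₀ : f g₀ ≠ 0) (g : G) :
    f g ≠ 0 := by
  obtain ⟨h, hh, k, rfl⟩ := exists_mul_mul_eq_of_isPretransitive (H := H) (K := K) g₀ g
  rwa [hP.apply_mul_mul_of_isFixed hF hh, map_ne_zero_iff _ (φ k)⁻¹.injective]

end Semiring

variable [DivisionRing M] [Algebra F M] {φ : K →* (M ≃ₐ[F] M)} {f : G → M}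

theorem IsEquivariant.inv (hP : IsEquivariant φ f) : IsEquivariant φ f⁻¹ :=
  fun g k => by simp only [Pi.inv_apply, hP g k, map_inv₀]

theorem IsEquivariant.exists_mul_eq_one [IsPretransitive H (G ⧸ K)] (hP : IsEquivariant φ f)
    (hF : IsFixed H f) (hf : f ≠ 0) :
    ∃ f' : G → M, IsEquivariant φ f' ∧ IsFixed H f' ∧ f * f' = 1 := by
  obtain ⟨g₀, hg₀⟩ := Function.ne_iff.mp hf
  exact ⟨f⁻¹, hP.inv, hF.comp _,
    funext fun g => mul_inv_cancel₀ (hP.apply_ne_zero_of_isPretransitive hF hg₀ g)⟩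

end Transitive

section Orbits

variable (M H) in
noncomputable def orbitIndicator [Zero M] [One M] (z : G ⧸ K) : G → M :=
  (QuotientGroup.mk ⁻¹' orbit H z).indicator 1

theorem isEquivariant_orbitIndicator [CommSemiring F] [Semiring M] [Algebra F M]
    (φ : K →* (M ≃ₐ[F] M)) (z : G ⧸ K) : IsEquivariant φ (orbitIndicator M H z) := by
  classical
  intro g k
  simp only [orbitIndicator, Set.indicator_apply, Set.mem_preimage,
    QuotientGroup.mk_mul_of_mem g k.2]
  split <;> simp

theorem isFixed_orbitIndicator [Zero M] [One M] (z : G ⧸ K) :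
    IsFixed H (orbitIndicator M H z) := by
  classical
  intro h hh g
  have hmk : ((h⁻¹ * g : G) : G ⧸ K) = (⟨h⁻¹, H.inv_mem hh⟩ : H) • (g : G ⧸ K) :=
    rfl
  simp only [orbitIndicator, Set.indicator_apply, Set.mem_preimage, hmk, ← orbit_eq_iff,
    orbit_smul, Pi.one_apply]

theorem orbitIndicator_ne_zero [Zero M] [One M] [NeZero (1 : M)] (z : G ⧸ K) :
    orbitIndicator M H z ≠ 0 := by
  obtain ⟨g, rfl⟩ := QuotientGroup.mk_surjective z
  refine Function.ne_iff.mpr ⟨g, ?_⟩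
  simp [orbitIndicator, mem_orbit_self]

theorem orbitIndicator_mul_eq_zero [MulZeroOneClass M] {x y : G ⧸ K} (hxy : y ∉ orbit H x) :
    orbitIndicator M H x * orbitIndicator M H y = 0 := by
  have hdisj : Disjoint (orbit H x) (orbit H y) :=
    (orbit.eq_or_disjoint x y).resolve_left fun h => hxy (h ▸ mem_orbit_self y)
  rw [orbitIndicator, orbitIndicator, ← Set.inter_indicator_one, ← Set.preimage_inter,
    hdisj.inter_eq, Set.preimage_empty, Set.indicator_empty]
  rfl

end Orbits

end InducedAlgebra

open InducedAlgebra in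
theorem induced_fixed_algebra_field_iff_transitive_general
    (F M : Type*) [Field F] [Field M] [Algebra F M]
    (G : Type*) [Group G] (K H : Subgroup G)
    (φ : K →* (M ≃ₐ[F] M)) :
    -- `P f`: f is a point of the induced algebra `Ind_K^G M`
    let P : (G → M) → Prop := fun f => ∀ (g : G) (k : K), f (g * k) = (φ k)⁻¹ (f g)
    -- `Fix f`: f is fixed by every element of `H`
    let Fix : (G → M) → Prop := fun f => ∀ h ∈ H, ∀ g : G, f (h⁻¹ * g) = f g
    ((∀ x y : G ⧸ K, ∃ h ∈ H, h • x = y) →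
        ∀ f : G → M, P f → Fix f → f ≠ 0 →
          ∃ f' : G → M, P f' ∧ Fix f' ∧ f * f' = 1) ∧
      ((¬ ∀ x y : G ⧸ K, ∃ h ∈ H, h • x = y) → (Nat.card H : F) ≠ 0 →
        ∃ f f' : G → M,
          P f ∧ Fix f ∧ P f' ∧ Fix f' ∧ f ≠ 0 ∧ f' ≠ 0 ∧ f * f' = 0) := by
  intro P Fix
  constructor
  · intro htrans f hP hF hf
    have : IsPretransitive H (G ⧸ K) :=
      ⟨fun x y => let ⟨h, hh, hxy⟩ := htrans x y; ⟨⟨h, hh⟩, hxy⟩⟩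
    exact IsEquivariant.exists_mul_eq_one hP hF hf
  · intro hntrans _
    obtain ⟨x, y, hxy⟩ : ∃ x y : G ⧸ K, y ∉ orbit H x := by
      push Not at hntrans
      obtain ⟨x, y, hxy⟩ := hntrans
      exact ⟨x, y, fun ⟨h, hyx⟩ => hxy h h.2 hyx⟩
    exact ⟨orbitIndicator M H x, orbitIndicator M H y, isEquivariant_orbitIndicator φ x,
      isFixed_orbitIndicator x, isEquivariant_orbitIndicator φ y, isFixed_orbitIndicator y,
      orbitIndicator_ne_zero x, orbitIndicator_ne_zero y, orbitIndicator_mul_eq_zero hxy⟩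

/-- Let `M/F` be a field extension with an action `φ` of a subgroup `K ≤ G` by
`F`-algebra automorphisms, and let `L = Ind_K^G M` be the induced `G`-algebra,
realized as the `K`-equivariant functions `f : G → M` (those with
`f(g·k) = φ(k)⁻¹(f(g))`), with pointwise operations and `G` acting by
`(σ·f)(g) = f(σ⁻¹g)`.  If `H ≤ G` acts transitively on `G/K`, then the `H`-fixed
subalgebra `L^H` is a field (every nonzero element has an inverse in `L^H`); if `H`
does not act transitively and `char F ∤ |H|`, then `L^H` contains a nonzero
zero-divisor, hence is not a field. -/
theorem induced_fixed_algebra_field_iff_transitive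
    (F M : Type*) [Field F] [Field M] [Algebra F M]
    (G : Type*) [Group G] [Finite G] (K H : Subgroup G)
    (φ : K →* (M ≃ₐ[F] M)) :
    -- `P f`: f is a point of the induced algebra `Ind_K^G M`
    let P : (G → M) → Prop := fun f => ∀ (g : G) (k : K), f (g * k) = (φ k)⁻¹ (f g)
    -- `Fix f`: f is fixed by every element of `H`
    let Fix : (G → M) → Prop := fun f => ∀ h ∈ H, ∀ g : G, f (h⁻¹ * g) = f g
    ((∀ x y : G ⧸ K, ∃ h ∈ H, h • x = y) →
        ∀ f : G → M, P f → Fix f → f ≠ 0 →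
          ∃ f' : G → M, P f' ∧ Fix f' ∧ f * f' = 1) ∧
      ((¬ ∀ x y : G ⧸ K, ∃ h ∈ H, h • x = y) → (Nat.card H : F) ≠ 0 →
        ∃ f f' : G → M,
          P f ∧ Fix f ∧ P f' ∧ Fix f' ∧ f ≠ 0 ∧ f' ≠ 0 ∧ f * f' = 0) :=
  induced_fixed_algebra_field_iff_transitive_general F M G K H φ
end

section
/- Let e ≥ 1 and let α_1,…,α_e be e commuting elements of a commutative ring, each satisfying α_i^e = t, such that the elementary symmetric polynomials satisfy s_1(α) = ⋯ = s_{e-1}(α) = 0 and s_e(α) = ±t. Then for any nonincreasing sequence of nonnegative integers (n_1,…,n_e), the monomial symmetric polynomial m_{(n_1,…,n_e)}(α_1,…,α_e) equals 0 if e does not divide n_1+⋯+n_e, and equals c·t^{(n_1+⋯+n_e)/e} for some integer c if e divides n_1+⋯+n_e. -/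
/-! By the fundamental theorem on symmetric polynomials, `m_n = Q(s_1, …, s_e)` with `Q` integral,
so once `s_1, …, s_{e-1}` vanish at `α`, `m_n(α) = q(s_e(α))` for a one-variable integer
polynomial `q`. Replacing `α` by `X α` over `R[X]` multiplies `m_n(α)` by `X^(∑ n_i)` and `s_e(α)`
by `X^e`, so comparing coefficients of `X^(∑ n_i)` leaves only the term of `q` of degree
`(∑ n_i) / e`, and no term at all when `e ∤ ∑ n_i`. -/

open Finset

namespace Polynomial

theorem coeff_aeval_C_mul_X_pow {R A : Type*} [CommSemiring R] [CommSemiring A] [Algebra R A]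
    (q : R[X]) (u : A) {e : ℕ} (he : 0 < e) (D : ℕ) :
    (aeval (C u * X ^ e) q).coeff D =
      if e ∣ D then algebraMap R A (q.coeff (D / e)) * u ^ (D / e) else 0 := by
  have hexpand :
      aeval (C u * X ^ e) q = expand A e ((q.map (algebraMap R A)).comp (C u * X)) := by
    rw [expand_eq_comp_X_pow, comp_assoc, mul_comp, C_comp, X_comp, comp, eval₂_map, aeval_def]
    rfl
  rw [hexpand, coeff_expand he, comp_C_mul_X_coeff, coeff_map]

end Polynomial

namespace MvPolynomial

section CommSemiring

variable {σ R A : Type*} [CommSemiring R] [CommSemiring A] [Algebra R A]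

theorem isHomogeneous_esymm [Fintype σ] (n : ℕ) : (esymm σ R n).IsHomogeneous n := by
  refine IsHomogeneous.sum _ _ _ fun S hS => ?_
  simpa [(mem_powersetCard.mp hS).2] using
    IsHomogeneous.prod S (fun i => (X i : MvPolynomial σ R)) (fun _ => 1)
      fun i _ => isHomogeneous_X R i

theorem aeval_esymm_card [Fintype σ] (x : σ → A) :
    aeval x (esymm σ R (Fintype.card σ)) = ∏ i, x i := by
  rw [esymm, ← card_univ, powersetCard_self, sum_singleton, map_prod]
  simp

theorem IsHomogeneous.aeval_const_mul {φ : MvPolynomial σ R} {n : ℕ} (hφ : φ.IsHomogeneous n)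
    (c : A) (x : σ → A) :
    MvPolynomial.aeval (fun i => c * x i) φ = c ^ n * MvPolynomial.aeval x φ := by
  rw [φ.as_sum]
  simp only [map_sum, mul_sum, aeval_monomial]
  refine sum_congr rfl fun d hd => ?_
  have hc : (d.prod fun _ k => c ^ k) = c ^ n := by
    rw [hφ.degree_eq_sum_deg_support hd, Finsupp.prod, prod_pow_eq_pow_sum]
  simp only [mul_pow, Finsupp.prod_mul, hc]
  ring

variable [Fintype σ] [DecidableEq σ]

variable (R) in
/-- The monomial symmetric polynomial `m_n`: every distinct rearrangement of `n` is counted once. -/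
noncomputable def monomialSymmetric (n : σ → ℕ) : MvPolynomial σ R :=
  ∑ f ∈ univ.image fun τ : Equiv.Perm σ => n ∘ τ, ∏ i, X i ^ f i

theorem isSymmetric_monomialSymmetric (n : σ → ℕ) : (monomialSymmetric R n).IsSymmetric := by
  intro τ
  rw [monomialSymmetric, map_sum]
  refine sum_nbij' (· ∘ ⇑τ⁻¹) (· ∘ ⇑τ) ?_ ?_ (fun f _ => ?_) (fun f _ => ?_) fun f _ => ?_
  · simp only [mem_image, mem_univ, true_and, forall_exists_index, forall_apply_eq_imp_iff]
    exact fun π => ⟨τ⁻¹.trans π, rfl⟩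
  · simp only [mem_image, mem_univ, true_and, forall_exists_index, forall_apply_eq_imp_iff]
    exact fun π => ⟨τ.trans π, rfl⟩
  · ext i; simp
  · ext i; simp
  · simp only [map_prod, map_pow, rename_X]
    exact Fintype.prod_equiv τ _ _ fun i => by simp

theorem isHomogeneous_monomialSymmetric (n : σ → ℕ) :
    (monomialSymmetric R n).IsHomogeneous (∑ i, n i) := by
  refine IsHomogeneous.sum _ _ _ fun f hf => ?_
  obtain ⟨τ, -, rfl⟩ := mem_image.mp hf
  rw [← Equiv.sum_comp τ n]
  exact IsHomogeneous.prod _ _ _ fun i _ => isHomogeneous_X_pow i _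

theorem aeval_monomialSymmetric (n : σ → ℕ) (x : σ → A) :
    aeval x (monomialSymmetric R n) =
      ∑ f ∈ univ.image fun τ : Equiv.Perm σ => n ∘ τ, ∏ i, x i ^ f i := by
  simp [monomialSymmetric]

end CommSemiring

section CommRing

variable {σ R : Type*} [Fintype σ] [CommRing R]

theorem IsSymmetric.exists_aeval_eq_aeval_prod {p : MvPolynomial σ R} (hp : p.IsSymmetric) :
    ∃ q : Polynomial R, ∀ (A : Type*) [CommSemiring A] [Algebra R A] (x : σ → A),
      (∀ j, 0 < j → j < Fintype.card σ → aeval x (esymm σ R j) = 0) →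
        aeval x p = Polynomial.aeval (∏ i, x i) q := by
  obtain ⟨Q, hQ⟩ := esymmAlgHom_surjective R le_rfl ⟨p, hp⟩
  have hpQ : p = aeval (fun j : Fin (Fintype.card σ) => esymm σ R (j + 1)) Q := by
    rw [← esymmAlgHom_apply, hQ]
  refine ⟨aeval (fun j : Fin (Fintype.card σ) =>
    if (j : ℕ) + 1 = Fintype.card σ then Polynomial.X else 0) Q, fun A _ _ x hx => ?_⟩
  rw [hpQ, comp_aeval_apply, comp_aeval_apply]
  congr 2 with j
  split_ifs with hj
  · rw [hj, aeval_esymm_card, Polynomial.aeval_X]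
  · rw [hx _ j.val.succ_pos (by omega), map_zero]

theorem IsSymmetric.aeval_eq_of_esymm_eq_zero {p : MvPolynomial σ R} {D : ℕ} (hp : p.IsSymmetric)
    (hD : p.IsHomogeneous D) (hσ : 0 < Fintype.card σ) {A : Type*} [CommRing A] [Algebra R A]
    (x : σ → A) (hx : ∀ j, 0 < j → j < Fintype.card σ → aeval x (esymm σ R j) = 0) :
    ∃ c : R, aeval x p = if Fintype.card σ ∣ D then
      algebraMap R A c * (∏ i, x i) ^ (D / Fintype.card σ) else 0 := by
  obtain ⟨q, hq⟩ := hp.exists_aeval_eq_aeval_prod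
  refine ⟨q.coeff (D / Fintype.card σ), ?_⟩
  set y : σ → Polynomial A := fun i => Polynomial.X * Polynomial.C (x i)
  have hy : ∀ φ : MvPolynomial σ R, ∀ n, φ.IsHomogeneous n →
      aeval y φ = Polynomial.C (aeval x φ) * Polynomial.X ^ n := fun φ n hφ => by
    rw [hφ.aeval_const_mul, mul_comm]
    exact congrArg (· * _) (aeval_algebraMap_apply (Polynomial A) x φ)
  have hprod : ∏ i, y i = Polynomial.C (∏ i, x i) * Polynomial.X ^ Fintype.card σ := by
    rw [prod_mul_distrib, prod_const, card_univ, ← map_prod, mul_comm]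
  have hqy := hq (Polynomial A) y fun j hj hjσ => by
    rw [hy _ _ (isHomogeneous_esymm j), hx j hj hjσ, map_zero, zero_mul]
  rw [hy p D hD, hprod] at hqy
  have hcoeff := congrArg (Polynomial.coeff · D) hqy
  rwa [Polynomial.coeff_C_mul_X_pow, if_pos rfl, Polynomial.coeff_aeval_C_mul_X_pow _ _ hσ]
    at hcoeff

end CommRing

end MvPolynomial

open MvPolynomial

theorem monomial_symmetric_of_radical_general (e : ℕ) (he : 1 ≤ e)
    (R : Type*) [CommRing R] (t : R) (α : Fin e → R)
    (hesymm : ∀ j, 1 ≤ j → j < e →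
      ∑ S ∈ Finset.powersetCard j (Finset.univ : Finset (Fin e)), ∏ i ∈ S, α i = 0)
    (htop : (∏ i, α i = t) ∨ (∏ i, α i = -t))
    (n : Fin e → ℕ) :
    (¬ e ∣ ∑ i, n i →
        ∑ f ∈ Finset.image (fun σ : Equiv.Perm (Fin e) => n ∘ σ) Finset.univ,
          ∏ i, α i ^ f i = 0) ∧
      (e ∣ ∑ i, n i →
        ∃ c : ℤ,
          ∑ f ∈ Finset.image (fun σ : Equiv.Perm (Fin e) => n ∘ σ) Finset.univ,
            ∏ i, α i ^ f i = c • t ^ ((∑ i, n i) / e)) := by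
  have hα : ∀ j, 0 < j → j < Fintype.card (Fin e) → aeval α (esymm (Fin e) ℤ j) = 0 := by
    intro j hj hje
    simpa [esymm] using hesymm j hj (by simpa using hje)
  obtain ⟨c, hc⟩ := (isSymmetric_monomialSymmetric (R := ℤ) n).aeval_eq_of_esymm_eq_zero
    (isHomogeneous_monomialSymmetric n) (by rw [Fintype.card_fin]; exact he) α hα
  rw [aeval_monomialSymmetric, Fintype.card_fin] at hc
  refine ⟨fun hdvd => by rw [hc, if_neg hdvd], fun hdvd => ?_⟩
  rw [hc, if_pos hdvd, algebraMap_int_eq, eq_intCast]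
  rcases htop with h | h
  · exact ⟨c, by rw [h, zsmul_eq_mul]⟩
  · exact ⟨(-1) ^ ((∑ i, n i) / e) * c, by rw [h, neg_pow, zsmul_eq_mul]; push_cast; ring⟩

/-- Let `α_1,…,α_e` be elements of a commutative ring with `α_i^e = t`, whose
elementary symmetric polynomials satisfy `s_1 = ⋯ = s_{e-1} = 0` and `s_e = ±t`.
Then for any nonincreasing sequence `(n_1,…,n_e)` of nonnegative integers, the
monomial symmetric polynomial `m_{(n_1,…,n_e)}(α)` vanishes if `e ∤ ∑ n_i`, and
equals `c·t^{(∑ n_i)/e}` for some integer `c` if `e ∣ ∑ n_i`. -/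
theorem monomial_symmetric_of_radical (e : ℕ) (he : 1 ≤ e)
    (R : Type*) [CommRing R] (t : R) (α : Fin e → R)
    (hpow : ∀ i, α i ^ e = t)
    (hesymm : ∀ j, 1 ≤ j → j < e →
      ∑ S ∈ Finset.powersetCard j (Finset.univ : Finset (Fin e)), ∏ i ∈ S, α i = 0)
    (htop : (∏ i, α i = t) ∨ (∏ i, α i = -t))
    (n : Fin e → ℕ) (hn : Antitone n) :
    (¬ e ∣ ∑ i, n i →
        ∑ f ∈ Finset.image (fun σ : Equiv.Perm (Fin e) => n ∘ σ) Finset.univ,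
          ∏ i, α i ^ f i = 0) ∧
      (e ∣ ∑ i, n i →
        ∃ c : ℤ,
          ∑ f ∈ Finset.image (fun σ : Equiv.Perm (Fin e) => n ∘ σ) Finset.univ,
            ∏ i, α i ^ f i = c • t ^ ((∑ i, n i) / e)) :=
  monomial_symmetric_of_radical_general e he R t α hesymm htop n
end

section
/- Let n ≥ 2 and let L be a field extension of k(t) of degree n with a k(t)-basis 1, α_1, …, α_{n-1}. Form the (n-2)×(n-2) matrix M whose (i,j) entry is the coefficient of α_{n-1} when α_i·α_j is written in this basis. Then det M ≠ 0. -/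
/-!
If `det M = 0`, a nonzero `c` with `c ᵥ* M = 0` gives `β = ∑ cᵢ αᵢ`, which is not a scalar
since its coordinates are `c`. Let `φ` be the `α_{n-1}`-coordinate. Then `φ (β * αⱼ) = 0` for all
`j ≠ n - 1` (for `j = 0` because `β` has no `α_{n-1}`-component), so `φ (β * x) = μ * φ x` with
`μ = φ (β * α_{n-1})`. Hence `φ` vanishes on `(β - μ) L`, which is all of `L` unless `β = μ`.
-/

section
variable {K L : Type*} [Field K] [DivisionRing L] [Algebra K L]

theorem eq_algebraMap_of_forall_apply_mul_eq {φ : L →ₗ[K] K} (hφ : φ ≠ 0) {β : L} {μ : K}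
    (h : ∀ x, φ (β * x) = μ * φ x) : β = algebraMap K L μ := by
  by_contra hne
  have hγ : β - algebraMap K L μ ≠ 0 := sub_ne_zero.mpr hne
  refine hφ (LinearMap.ext fun x => ?_)
  calc φ x = φ ((β - algebraMap K L μ) * ((β - algebraMap K L μ)⁻¹ * x)) := by
        rw [mul_inv_cancel_left₀ hγ]
    _ = 0 := by rw [sub_mul, map_sub, h, ← Algebra.smul_def, map_smul, smul_eq_mul, sub_self]

theorem Module.Basis.eq_algebraMap_of_coord_mul_eq_zero {ι : Type*} (b : Module.Basis ι K L)
    (i : ι) {β : L} (h : ∀ j ≠ i, b.coord i (β * b j) = 0) :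
    β = algebraMap K L (b.coord i (β * b i)) := by
  classical
  refine eq_algebraMap_of_forall_apply_mul_eq (φ := b.coord i) (fun h0 => ?_) fun x => ?_
  · simpa using LinearMap.congr_fun h0 (b i)
  · have hcomp : (b.coord i).comp (LinearMap.mulLeft K β) = b.coord i (β * b i) • b.coord i := by
      refine b.ext fun j => ?_
      by_cases hj : j = i
      · subst hj; simp
      · simp [h j hj, Module.Basis.coord_apply, Ne.symm hj]
    exact LinearMap.congr_fun hcomp x

end

namespace Module.Basis

variable {ι κ R M : Type*} [Semiring R] [AddCommMonoid M] [Module R M] [Fintype κ]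
  (b : Basis ι R M) (c : κ → R) {e : κ → ι}

theorem repr_sum_smul_comp_apply (he : e.Injective) (k : κ) :
    b.repr (∑ i, c i • b (e i)) (e k) = c k := by
  classical
  simp [Finsupp.single_apply, he.eq_iff]

theorem repr_sum_smul_comp_apply_of_notMem_range {j : ι} (hj : j ∉ Set.range e) :
    b.repr (∑ i, c i • b (e i)) j = 0 := by
  classical
  simp only [Set.mem_range, not_exists] at hj
  simp [hj]

end Module.Basis

/-- Let `L` be a degree-`n` field extension of `k(t)` with basis `1, α_1, …, α_{n-1}`.
The `(n-2)×(n-2)` matrix `M` whose `(i,j)` entry is the coefficient of `α_{n-1}` in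
`α_i·α_j` has nonzero determinant. -/
theorem det_coefficient_matrix_ne_zero
    (k : Type*) [Field k] (L : Type*) [Field L] [Algebra (RatFunc k) L]
    (n : ℕ) (hn : 2 ≤ n) (b : Module.Basis (Fin n) (RatFunc k) L)
    (hb : b ⟨0, by omega⟩ = 1) :
    (Matrix.of fun i j : Fin (n - 2) =>
        b.repr (b ⟨i.1 + 1, by have := i.isLt; omega⟩ *
          b ⟨j.1 + 1, by have := j.isLt; omega⟩) ⟨n - 1, by omega⟩).det ≠ 0 := by
  intro hdet
  obtain ⟨c, hc, hcM⟩ := Matrix.exists_vecMul_eq_zero_iff.mpr hdet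
  obtain ⟨i₀, hi₀⟩ := Function.ne_iff.mp hc
  let e : Fin (n - 2) → Fin n := fun i => ⟨i.1 + 1, by have := i.isLt; omega⟩
  have he : e.Injective := fun i j h => Fin.ext (by simpa [e] using h)
  have hlast : (⟨n - 1, by omega⟩ : Fin n) ∉ Set.range e := by
    rintro ⟨i, hi⟩
    have := congrArg Fin.val hi
    simp only [e] at this
    omega
  set β := ∑ i, c i • b (e i)
  have hβ : ∀ j ≠ ⟨n - 1, by omega⟩, b.coord ⟨n - 1, by omega⟩ (β * b j) = 0 := by
    intro j hj
    rcases Nat.eq_zero_or_pos j with h0 | hpos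
    · rw [show j = ⟨0, by omega⟩ from Fin.ext h0, hb, mul_one]
      exact b.repr_sum_smul_comp_apply_of_notMem_range c hlast
    · have : j.1 ≠ n - 1 := fun h => hj (Fin.ext h)
      obtain ⟨j, rfl⟩ : ∃ j', e j' = j := ⟨⟨j - 1, by omega⟩, Fin.ext (by simp [e]; omega)⟩
      simpa [Matrix.vecMul, dotProduct, β, Finset.sum_mul, smul_mul_assoc] using congrFun hcM j
  obtain ⟨μ, hμ⟩ : ∃ μ, β = algebraMap (RatFunc k) L μ :=
    ⟨_, b.eq_algebraMap_of_coord_mul_eq_zero _ hβ⟩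
  have hμ_coord : b.repr (algebraMap (RatFunc k) L μ) (e i₀) = 0 := by
    rw [Algebra.algebraMap_eq_smul_one, ← hb]
    simp [e]
  apply hi₀
  calc c i₀ = b.repr β (e i₀) := (b.repr_sum_smul_comp_apply c he i₀).symm
    _ = 0 := by rw [hμ, hμ_coord]
end
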